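/- For a Lipschitz function φ : Y → ℝ on a bounded set Y ⊂ ℝ² whose zero level set is a C¹ curve with |∇φ| bounded below by a positive constant, the number of grid points y_{jk} on a uniform grid with spacing h_Y satisfying |φ(y_{jk})| < K·h_Y is O(1/h_Y) as h_Y → 0. -/

import Mathlib

/-!
Let `h` be the grid spacing. If `|φ p| < K h`, then minimizing `|φ x| + (κ / 2) ‖x - p‖` over the
square gives a zero of `φ` within `2 K h / κ` of `p`, provided the square contains the ball of that
radius around `p`: at a minimizer `q` with `φ q ≠ 0`, moving against the sign of `φ q` along a
direction where `|φ' q| > κ / 2` would lower the functional. So away from the boundary such grid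
points lie within `O(h)` of the curve, hence within `O(h)` of one of the `M + 1` samples
`γ (i / M)` since `γ` is Lipschitz on `[0, 1]`, and each sample has `O(1)` grid points that close.
The grid points near the boundary are `O(M)` in number.
-/

open Set Filter Topology Metric
open scoped Finset NNReal

variable {E : Type*} [NormedAddCommGroup E] [NormedSpace ℝ E]

theorem ContinuousLinearMap.exists_lt_neg_mul_norm (f : E →L[ℝ] ℝ) {c : ℝ} (hc : 0 ≤ c) (hcf : c < ‖f‖) :
    ∃ w, f w < -(c * ‖w‖) := by
  obtain ⟨v, hv⟩ : ∃ v, c * ‖v‖ < |f v| := by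
    by_contra! h
    exact hcf.not_ge ((f.opNorm_le_iff hc).2 h)
  rcases lt_abs.1 hv with hpos | hneg
  · exact ⟨-v, by simpa using hpos⟩
  · exact ⟨v, by linarith⟩

theorem HasFDerivAt.frequently_abs_add_mul_norm_sub_lt {f : E → ℝ} {f' : E →L[ℝ] ℝ} {q : E}
    (hf : HasFDerivAt f f' q) (hq : 0 < f q) {c : ℝ} (hc : 0 ≤ c) (hcf : c < ‖f'‖) :
    ∃ᶠ x in 𝓝 q, |f x| + c * ‖x - q‖ < f q := by
  obtain ⟨w, hw⟩ := f'.exists_lt_neg_mul_norm hc hcf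
  set ℓ : ℝ → E := fun t => q + t • w
  have hℓ : Tendsto ℓ (𝓝[>] 0) (𝓝 q) := by
    have : Continuous ℓ := by fun_prop
    simpa [ℓ] using (this.tendsto 0).mono_left nhdsWithin_le_nhds
  have hderiv : HasDerivAt (f ∘ ℓ) (f' w) 0 := by
    have hℓ' : HasDerivAt ℓ w 0 := by
      simpa [ℓ] using ((hasDerivAt_id (0 : ℝ)).smul_const w).const_add q
    exact (by simpa [ℓ] using hf : HasFDerivAt f f' (ℓ 0)).comp_hasDerivAt 0 hℓ'
  have hslope : ∀ᶠ t in 𝓝[>] 0, slope (f ∘ ℓ) 0 t < -(c * ‖w‖) :=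
    ((hasDerivAt_iff_tendsto_slope.1 hderiv).mono_left
      (nhdsWithin_mono _ (by simp))).eventually (gt_mem_nhds hw)
  have hpos : ∀ᶠ t in 𝓝[>] 0, 0 < f (ℓ t) :=
    hℓ.eventually (hf.continuousAt.eventually (lt_mem_nhds hq))
  refine hℓ.frequently (Eventually.frequently ?_)
  filter_upwards [hslope, hpos, self_mem_nhdsWithin] with t hs hp (ht : 0 < t)
  rw [slope_def_field, div_lt_iff₀ (by simpa using ht)] at hs
  have hnorm : ‖ℓ t - q‖ = t * ‖w‖ := by simp [ℓ, norm_smul, _root_.abs_of_pos ht]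
  simp only [Function.comp, ℓ, zero_smul, add_zero, sub_zero] at hs hnorm hp ⊢
  rw [hnorm, _root_.abs_of_pos hp]
  nlinarith

theorem HasFDerivAt.frequently_abs_add_mul_norm_sub_lt_abs {f : E → ℝ} {f' : E →L[ℝ] ℝ}
    {q : E} (hf : HasFDerivAt f f' q) (hq : f q ≠ 0) {c : ℝ} (hc : 0 ≤ c) (hcf : c < ‖f'‖) :
    ∃ᶠ x in 𝓝 q, |f x| + c * ‖x - q‖ < |f q| := by
  rcases hq.lt_or_gt with hneg | hpos
  · simpa [_root_.abs_of_neg hneg] using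
      hf.neg.frequently_abs_add_mul_norm_sub_lt (neg_pos.2 hneg) hc (by rwa [norm_neg])
  · simpa [_root_.abs_of_pos hpos] using hf.frequently_abs_add_mul_norm_sub_lt hpos hc hcf

theorem exists_zero_dist_le_of_le_norm_fderiv {s : Set E} (hs : IsCompact s) {φ : E → ℝ}
    (hdiff : ∀ x ∈ s, DifferentiableAt ℝ φ x) {κ : ℝ} (hκ : 0 < κ)
    (hgrad : ∀ x ∈ s, κ ≤ ‖fderiv ℝ φ x‖) {p : E} (hp : p ∈ s)
    (hball : closedBall p (2 * |φ p| / κ) ⊆ interior s) :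
    ∃ q ∈ s, φ q = 0 ∧ dist q p ≤ 2 * |φ p| / κ := by
  have hcont : ContinuousOn (fun x => |φ x| + κ / 2 * dist x p) s := fun x hx =>
    ((hdiff x hx).continuousAt.abs.add (by fun_prop)).continuousWithinAt
  obtain ⟨q, hqs, hmin⟩ := hs.exists_isMinOn ⟨p, hp⟩ hcont
  have hqp : dist q p ≤ 2 * |φ p| / κ := by
    have : |φ q| + κ / 2 * dist q p ≤ |φ p| + κ / 2 * dist p p := hmin hp
    rw [dist_self, mul_zero, add_zero] at this
    rw [le_div_iff₀ hκ]
    nlinarith [abs_nonneg (φ q)]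
  refine ⟨q, hqs, ?_, hqp⟩
  by_contra hq0
  have hsq : s ∈ 𝓝 q := mem_interior_iff_mem_nhds.1 (hball (mem_closedBall.2 hqp))
  have hdescent := (hdiff q hqs).hasFDerivAt.frequently_abs_add_mul_norm_sub_lt_abs hq0
    (c := κ / 2) (by positivity) (by linarith [hgrad q hqs])
  obtain ⟨x, hx, hxs⟩ := (hdescent.and_eventually hsq).exists
  have hFx : |φ q| + κ / 2 * dist q p ≤ |φ x| + κ / 2 * dist x p := hmin hxs
  have htri : dist x p ≤ ‖x - q‖ + dist q p := by
    rw [← dist_eq_norm]; exact dist_triangle x q p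
  nlinarith

theorem exists_dist_lt_of_zeroSet_eq_image {s : Set E} (hs : IsCompact s) {φ : E → ℝ}
    (hdiff : ∀ x ∈ s, DifferentiableAt ℝ φ x) {κ : ℝ} (hκ : 0 < κ)
    (hgrad : ∀ x ∈ s, κ ≤ ‖fderiv ℝ φ x‖) {γ : ℝ → E} {T : Set ℝ}
    (hcurve : {x ∈ s | φ x = 0} = γ '' T) {p : E} {r : ℝ} (hr : 2 * |φ p| / κ < r)
    (hball : ball p r ⊆ s) : ∃ t ∈ T, dist (γ t) p < r := by
  obtain ⟨q, hqs, hq0, hqp⟩ := exists_zero_dist_le_of_le_norm_fderiv hs hdiff hκ hgrad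
    (hball (mem_ball_self ((by positivity : (0 : ℝ) ≤ _).trans_lt hr)))
    ((closedBall_subset_ball hr).trans (interior_maximal hball isOpen_ball))
  obtain ⟨t, ht, rfl⟩ : q ∈ γ '' T := hcurve ▸ ⟨hqs, hq0⟩
  exact ⟨t, ht, hqp.trans_lt hr⟩

theorem card_filter_abs_natCast_sub_le (n : ℕ) (x : ℝ) {ρ : ℝ} (hρ : 0 ≤ ρ) :
    (#{j : Fin n | |(j : ℝ) - x| ≤ ρ} : ℝ) ≤ 2 * ρ + 1 := by
  have hmaps : ∀ j ∈ ({j : Fin n | |(j : ℝ) - x| ≤ ρ} : Finset (Fin n)),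
      ((j : ℕ) : ℤ) ∈ Finset.Icc ⌈x - ρ⌉ ⌊x + ρ⌋ := by
    intro j hj
    rw [Finset.mem_filter, abs_le] at hj
    rw [Finset.mem_Icc, Int.ceil_le, Int.le_floor, Int.cast_natCast]
    constructor <;> linarith [hj.2]
  have hcard := Finset.card_le_card_of_injOn _ hmaps
    (fun a _ b _ hab => Fin.val_injective (by exact_mod_cast hab))
  rw [Int.card_Icc] at hcard
  calc (#{j : Fin n | |(j : ℝ) - x| ≤ ρ} : ℝ)
      ≤ (((⌊x + ρ⌋ + 1 - ⌈x - ρ⌉).toNat : ℤ) : ℝ) := by exact_mod_cast hcard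
    _ ≤ 2 * ρ + 1 := by
      rw [Int.toNat_eq_max, Int.cast_max, max_le_iff]
      push_cast
      constructor <;> linarith [Int.floor_le (x + ρ), Int.le_ceil (x - ρ)]

def gridPoint {n : ℕ} (y₀ h : ℝ) (a : Fin n × Fin n) : ℝ × ℝ :=
  (y₀ + a.1 * h, y₀ + a.2 * h)

theorem abs_add_mul_sub_le_mul_iff (y₀ u j ρ : ℝ) {h : ℝ} (hh : 0 < h) :
    |y₀ + j * h - u| ≤ ρ * h ↔ |j - (u - y₀) / h| ≤ ρ := by
  rw [show y₀ + j * h - u = (j - (u - y₀) / h) * h by field_simp; ring, abs_mul,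
    abs_of_pos hh, mul_le_mul_iff_left₀ hh]

theorem card_filter_dist_gridPoint_le (n : ℕ) (y₀ : ℝ) {h : ℝ} (hh : 0 < h) (z : ℝ × ℝ)
    {ρ : ℝ} (hρ : 0 ≤ ρ) :
    (#{a : Fin n × Fin n | dist (gridPoint y₀ h a) z ≤ ρ * h} : ℝ) ≤ (2 * ρ + 1) ^ 2 := by
  have hprod : ({a | dist (gridPoint y₀ h a) z ≤ ρ * h} : Finset (Fin n × Fin n)) =
      ({j | |(j : ℝ) - (z.1 - y₀) / h| ≤ ρ} : Finset (Fin n)) ×ˢ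
        ({k | |(k : ℝ) - (z.2 - y₀) / h| ≤ ρ} : Finset (Fin n)) := by
    rw [← Finset.univ_product_univ, ← Finset.filter_product]
    refine Finset.filter_congr fun a _ => ?_
    rw [gridPoint, Prod.dist_eq, max_le_iff, Real.dist_eq, Real.dist_eq,
      abs_add_mul_sub_le_mul_iff _ _ _ _ hh, abs_add_mul_sub_le_mul_iff _ _ _ _ hh]
  rw [hprod, Finset.card_product, Nat.cast_mul, sq]
  exact mul_le_mul (card_filter_abs_natCast_sub_le _ _ hρ) (card_filter_abs_natCast_sub_le _ _ hρ)
    (by positivity) (by positivity)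

open scoped Classical in
theorem card_filter_not_ball_subset_Icc_le (M : ℕ) (y₀ : ℝ) {h : ℝ} (hh : 0 < h) {ρ : ℝ}
    (hρ : 0 ≤ ρ) :
    (#{j : Fin (M + 1) | ¬ball (y₀ + j * h) (ρ * h) ⊆ Icc y₀ (y₀ + M * h)} : ℝ) ≤
      2 * (2 * ρ + 1) := by
  set near : ℝ → Finset (Fin (M + 1)) := fun x => {j | |(j : ℝ) - x| ≤ ρ}
  have hsub : ({j | ¬ball (y₀ + j * h) (ρ * h) ⊆ Icc y₀ (y₀ + M * h)} : Finset (Fin (M + 1))) ⊆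
      near 0 ∪ near M := by
    intro j
    simp only [Finset.mem_union, Finset.mem_filter, Finset.mem_univ, true_and, near]
    contrapose!
    rintro ⟨hj0, hjM⟩
    have hjM' : (j : ℝ) ≤ M := by exact_mod_cast Nat.lt_succ_iff.1 j.isLt
    rw [sub_zero, abs_of_nonneg (by positivity)] at hj0
    rw [abs_of_nonpos (by linarith)] at hjM
    rw [Real.ball_eq_Ioo]
    exact Ioo_subset_Icc_self.trans (Icc_subset_Icc (by nlinarith) (by nlinarith))
  calc _ ≤ (#(near 0 ∪ near M) : ℝ) := by exact_mod_cast Finset.card_le_card hsub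
    _ ≤ #(near 0) + #(near M) := by exact_mod_cast Finset.card_union_le _ _
    _ ≤ 2 * (2 * ρ + 1) := by
        linarith [card_filter_abs_natCast_sub_le (M + 1) 0 hρ,
          card_filter_abs_natCast_sub_le (M + 1) M hρ]

open scoped Classical in
theorem card_filter_not_ball_gridPoint_subset_le (M : ℕ) (y₀ : ℝ) {h : ℝ} (hh : 0 < h)
    {ρ : ℝ} (hρ : 0 ≤ ρ) :
    (#{a : Fin (M + 1) × Fin (M + 1) |
        ¬ball (gridPoint y₀ h a) (ρ * h) ⊆ Icc y₀ (y₀ + M * h) ×ˢ Icc y₀ (y₀ + M * h)} : ℝ) ≤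
      4 * (2 * ρ + 1) * (M + 1) := by
  set edge : Finset (Fin (M + 1)) := {j | ¬ball (y₀ + j * h) (ρ * h) ⊆ Icc y₀ (y₀ + M * h)}
  have hsub : ({a | ¬ball (gridPoint y₀ h a) (ρ * h) ⊆ Icc y₀ (y₀ + M * h) ×ˢ
      Icc y₀ (y₀ + M * h)} : Finset (Fin (M + 1) × Fin (M + 1))) ⊆
        edge ×ˢ Finset.univ ∪ Finset.univ ×ˢ edge := by
    intro a
    simp only [Finset.mem_union, Finset.mem_product, Finset.mem_filter, Finset.mem_univ,
      true_and, and_true, edge, gridPoint, ← ball_prod_same]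
    contrapose!
    exact fun h => prod_mono h.1 h.2
  have hedge := card_filter_not_ball_subset_Icc_le M y₀ hh hρ
  calc _ ≤ (#(edge ×ˢ Finset.univ ∪ Finset.univ ×ˢ edge) : ℝ) := by
        exact_mod_cast Finset.card_le_card hsub
    _ ≤ #edge * (M + 1) + (M + 1) * #edge := by
        have := Finset.card_union_le (edge ×ˢ Finset.univ) (Finset.univ ×ˢ edge)
        rw [Finset.card_product, Finset.card_product, Finset.card_univ, Fintype.card_fin] at this
        exact_mod_cast this
    _ ≤ 4 * (2 * ρ + 1) * (M + 1) := by nlinarith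

theorem LipschitzOnWith.exists_dist_le_div {X : Type*} [PseudoMetricSpace X] {γ : ℝ → X}
    {Λ : ℝ≥0} (hγ : LipschitzOnWith Λ γ (Icc 0 1)) {M : ℕ} (hM : 0 < M) {t : ℝ}
    (ht : t ∈ Icc (0 : ℝ) 1) :
    ∃ i ∈ Finset.range (M + 1), dist (γ t) (γ (i / M)) ≤ Λ / M := by
  have hMpos : (0 : ℝ) < M := Nat.cast_pos.2 hM
  have htM : t * M ≤ M := by nlinarith [ht.2]
  set i := ⌊t * M⌋₊
  have hiM : (i : ℝ) ≤ M := (Nat.floor_le (by nlinarith [ht.1])).trans htM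
  have hi : (i : ℝ) / M ∈ Icc (0 : ℝ) 1 := ⟨by positivity, (div_le_one hMpos).2 hiM⟩
  have hdist : dist t (i / M) ≤ 1 / M := by
    rw [Real.dist_eq, show t - i / M = (t * M - i) / M by field_simp, abs_div,
      abs_of_pos hMpos]
    gcongr
    rw [abs_le]
    constructor <;> linarith [Nat.floor_le (by nlinarith [ht.1] : 0 ≤ t * M),
      Nat.lt_floor_add_one (t * M)]
  refine ⟨i, Finset.mem_range_succ_iff.2 (by exact_mod_cast hiM), ?_⟩
  calc dist (γ t) (γ (i / M)) ≤ Λ * dist t (i / M) := hγ.dist_le_mul t ht _ hi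
    _ ≤ Λ * (1 / M) := by gcongr
    _ = Λ / M := mul_one_div _ _

open scoped Classical in
theorem ncard_le_of_imp_exists_dist_gridPoint_le (M : ℕ) (y₀ : ℝ) {h : ℝ}
    (hh : 0 < h) {ρ ρ' : ℝ} (hρ : 0 ≤ ρ) (hρ' : 0 ≤ ρ') (z : ℕ → ℝ × ℝ)
    (P : Fin (M + 1) × Fin (M + 1) → Prop)
    (hP : ∀ a, P a →
      ball (gridPoint y₀ h a) (ρ * h) ⊆ Icc y₀ (y₀ + M * h) ×ˢ Icc y₀ (y₀ + M * h) →
        ∃ i ∈ Finset.range (M + 1), dist (gridPoint y₀ h a) (z i) ≤ ρ' * h) :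
    ({a | P a}.ncard : ℝ) ≤ (4 * (2 * ρ + 1) + (2 * ρ' + 1) ^ 2) * (M + 1) := by
  set edge : Finset (Fin (M + 1) × Fin (M + 1)) :=
    {a | ¬ball (gridPoint y₀ h a) (ρ * h) ⊆ Icc y₀ (y₀ + M * h) ×ˢ Icc y₀ (y₀ + M * h)}
  set near : ℕ → Finset (Fin (M + 1) × Fin (M + 1)) :=
    fun i => {a | dist (gridPoint y₀ h a) (z i) ≤ ρ' * h}
  have hsub : {a | P a} ⊆ ↑(edge ∪ (Finset.range (M + 1)).biUnion near) := by
    intro a ha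
    by_cases hedge : a ∈ edge
    · exact Finset.mem_union_left _ hedge
    · obtain ⟨i, hi, hdist⟩ := hP a ha (by simpa [edge] using hedge)
      exact Finset.mem_union_right _ (Finset.mem_biUnion.2 ⟨i, hi, by simpa [near] using hdist⟩)
  have hnear : ∀ i ∈ Finset.range (M + 1), (#(near i) : ℝ) ≤ (2 * ρ' + 1) ^ 2 :=
    fun i _ => card_filter_dist_gridPoint_le _ y₀ hh (z i) hρ'
  calc ({a | P a}.ncard : ℝ)
      ≤ #edge + ∑ i ∈ Finset.range (M + 1), (#(near i) : ℝ) := by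
        rw [← Nat.cast_sum]
        exact_mod_cast (Set.ncard_le_ncard hsub (Finset.finite_toSet _)).trans
          ((Set.ncard_coe_finset _).trans_le ((Finset.card_union_le _ _).trans
            (Nat.add_le_add_left Finset.card_biUnion_le _)))
    _ ≤ 4 * (2 * ρ + 1) * (M + 1) + (M + 1) * (2 * ρ' + 1) ^ 2 := by
        gcongr
        · exact card_filter_not_ball_gridPoint_subset_le M y₀ hh hρ
        · simpa using Finset.sum_le_card_nsmul _ _ _ hnear
    _ = (4 * (2 * ρ + 1) + (2 * ρ' + 1) ^ 2) * (M + 1) := by ring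

theorem grid_points_near_level_set_general (y₀ ymax : ℝ) (hy : y₀ < ymax)
    (φ : ℝ × ℝ → ℝ)
    (hdiff : ∀ p ∈ Set.Icc y₀ ymax ×ˢ Set.Icc y₀ ymax, DifferentiableAt ℝ φ p)
    (κ : ℝ) (hκ : 0 < κ)
    (hgrad : ∀ p ∈ Set.Icc y₀ ymax ×ˢ Set.Icc y₀ ymax, κ ≤ ‖fderiv ℝ φ p‖)
    (γ : ℝ → ℝ × ℝ) (hγ : ContDiff ℝ 1 γ)
    (hcurve : {p ∈ Set.Icc y₀ ymax ×ˢ Set.Icc y₀ ymax | φ p = 0} = γ '' Set.Icc 0 1)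
    (K : ℝ) :
    ∃ C > 0, ∀ M : ℕ, 0 < M →
      (Set.ncard {jk : Fin (M + 1) × Fin (M + 1) |
          |φ (y₀ + jk.1 * ((ymax - y₀) / M), y₀ + jk.2 * ((ymax - y₀) / M))| <
            K * ((ymax - y₀) / M)} : ℝ) ≤ C / ((ymax - y₀) / M) := by
  obtain ⟨Λ, hΛ⟩ :=
    hγ.contDiffOn.exists_lipschitzOnWith one_ne_zero (convex_Icc (0 : ℝ) 1) isCompact_Icc
  have hY : 0 < ymax - y₀ := sub_pos.2 hy
  set ρ : ℝ := 2 * |K| / κ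
  set ρ' : ℝ := ρ + Λ / (ymax - y₀)
  set A : ℝ := 4 * (2 * ρ + 1) + (2 * ρ' + 1) ^ 2
  refine ⟨2 * A * (ymax - y₀), by positivity, fun M hM => ?_⟩
  set h := (ymax - y₀) / M
  have hMpos : (0 : ℝ) < M := Nat.cast_pos.2 hM
  have hh : 0 < h := by positivity
  have hMh : M * h = ymax - y₀ := mul_div_cancel₀ _ hMpos.ne'
  have hnear (a : Fin (M + 1) × Fin (M + 1)) (ha : |φ (gridPoint y₀ h a)| < K * h)
      (hball : ball (gridPoint y₀ h a) (ρ * h) ⊆ Icc y₀ (y₀ + M * h) ×ˢ Icc y₀ (y₀ + M * h)) :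
      ∃ i ∈ Finset.range (M + 1), dist (gridPoint y₀ h a) (γ (i / M)) ≤ ρ' * h := by
    rw [hMh, add_sub_cancel] at hball
    have hr : 2 * |φ (gridPoint y₀ h a)| / κ < ρ * h := by
      rw [div_mul_eq_mul_div, div_lt_div_iff_of_pos_right hκ]
      nlinarith [le_abs_self K]
    obtain ⟨t, ht, hpt⟩ := exists_dist_lt_of_zeroSet_eq_image (isCompact_Icc.prod isCompact_Icc)
      hdiff hκ hgrad hcurve hr hball
    obtain ⟨i, hi, hγi⟩ := hΛ.exists_dist_le_div hM ht
    refine ⟨i, hi, ?_⟩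
    calc dist (gridPoint y₀ h a) (γ (i / M))
        ≤ dist (γ t) (gridPoint y₀ h a) + dist (γ t) (γ (i / M)) := dist_triangle_left _ _ _
      _ ≤ ρ * h + Λ / M := add_le_add hpt.le hγi
      _ = ρ' * h := by simp only [ρ', h]; field_simp
  calc _ ≤ A * (M + 1) := ncard_le_of_imp_exists_dist_gridPoint_le M y₀ hh
        (by positivity) (by positivity) (fun i => γ (i / M)) _ hnear
    _ ≤ 2 * A * (ymax - y₀) / h := by
        rw [show 2 * A * (ymax - y₀) / h = 2 * A * M by rw [← hMh]; field_simp]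
        nlinarith [(by positivity : 0 ≤ A), (by exact_mod_cast hM : (1 : ℝ) ≤ M)]

theorem grid_points_near_level_set (y₀ ymax : ℝ) (hy : y₀ < ymax)
    (φ : ℝ × ℝ → ℝ) (L : NNReal)
    (hLip : LipschitzOnWith L φ (Set.Icc y₀ ymax ×ˢ Set.Icc y₀ ymax))
    (hdiff : ∀ p ∈ Set.Icc y₀ ymax ×ˢ Set.Icc y₀ ymax, DifferentiableAt ℝ φ p)
    (κ : ℝ) (hκ : 0 < κ)
    (hgrad : ∀ p ∈ Set.Icc y₀ ymax ×ˢ Set.Icc y₀ ymax, κ ≤ ‖fderiv ℝ φ p‖)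
    (γ : ℝ → ℝ × ℝ) (hγ : ContDiff ℝ 1 γ)
    (hcurve : {p ∈ Set.Icc y₀ ymax ×ˢ Set.Icc y₀ ymax | φ p = 0} = γ '' Set.Icc 0 1)
    (K : ℝ) (hK : 0 < K) :
    ∃ C > 0, ∀ M : ℕ, 0 < M →
      (Set.ncard {jk : Fin (M + 1) × Fin (M + 1) |
          |φ (y₀ + jk.1 * ((ymax - y₀) / M), y₀ + jk.2 * ((ymax - y₀) / M))| <
            K * ((ymax - y₀) / M)} : ℝ) ≤ C / ((ymax - y₀) / M) :=
  grid_points_near_level_set_general y₀ ymax hy φ hdiff κ hκ hgrad γ hγ hcurve K
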